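/- arXiv:math/0511739 — 2 statements merged into one kernel-verified Lean document; each statement's English description precedes it below -/
import Mathlib

section
/- Let d ≥ 1 be an integer, 0 < α ≤ 2, 0 < β ≤ 1 with α/β ≤ d < α(1+β)/β. Let q : ℝ^d → [0,∞) be measurable with q(x) ≤ c₂/(1+‖x‖^{d+α}) for some c₂ > 0, and set p_t(x) = t^{−d/α} q(t^{−1/α} x) for t > 0. Fix γ with 0 < γ < 1+β−(d/α)β and set p = (1+β)/(1+β−γ). Then ∫_{ℝ^d} ( ∫_0^1 p_s(x)^p ds )^{(1+β)/p} dx < ∞. -/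
open MeasureTheory

/-- The density at time `t` of a self-similar transition kernel on `ℝ^d`:
`p_t(x) = t^{−d/α} q(t^{−1/α} x)`. -/
noncomputable def pker (d : ℕ) (α : ℝ) (q : EuclideanSpace ℝ (Fin d) → ℝ) (t : ℝ)
    (x : EuclideanSpace ℝ (Fin d)) : ℝ :=
  t ^ (-(d : ℝ) / α) * q ((t ^ (-(1 : ℝ) / α)) • x)

open Set Metric Module

/-!
Self-similarity gives two bounds on the kernel for `0 < s ≤ 1`: `p_s(x) ≤ c₂ s^{-d/α}` from
`q ≤ c₂`, and `p_s(x) ≤ c₂ s ‖x‖^{-(d+α)}` from the decay of `q`. Splitting the time integral at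
`s = ‖x‖^α`, where the two bounds cross, `G(x) = ∫₀¹ p_s(x)^p ds` is `O(‖x‖^{α-dp})` for `‖x‖ ≤ 1`
as long as `dp > α`, while the decay bound alone gives `G(x) = O(‖x‖^{-(d+α)p})`. With
`r = (1+β)/p = 1+β-γ`, `G^r` is then bounded by `‖x‖^{-(dp-α)r}` near the origin, where
`(dp-α)r < d` is exactly `γ < 1+β-(d/α)β`, and by `‖x‖^{-(d+α)(1+β)}` at infinity, so it is
integrable on `ℝ^d`.
-/

lemma rpow_le_of_le_mul_rpow {g C y e r : ℝ} (hg : 0 ≤ g) (h : g ≤ C * y ^ e) (hC : 0 ≤ C)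
    (hy : 0 ≤ y) (hr : 0 ≤ r) : g ^ r ≤ C ^ r * y ^ (e * r) := by
  calc g ^ r ≤ (C * y ^ e) ^ r := Real.rpow_le_rpow hg h hr
    _ = C ^ r * y ^ (e * r) := by
        rw [Real.mul_rpow hC (Real.rpow_nonneg hy e), Real.rpow_mul hy]

lemma rpow_neg_le_two_rpow_mul_one_add_rpow_neg {y b : ℝ} (hy : 1 ≤ y) (hb : 0 ≤ b) :
    y ^ (-b) ≤ 2 ^ b * (1 + y) ^ (-b) := by
  calc y ^ (-b) = 2 ^ b * (2 * y) ^ (-b) := by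
        rw [Real.mul_rpow zero_le_two (by linarith), ← mul_assoc, ← Real.rpow_add zero_lt_two,
          add_neg_cancel, Real.rpow_zero, one_mul]
    _ ≤ 2 ^ b * (1 + y) ^ (-b) := by
        gcongr _ * ?_
        exact Real.rpow_le_rpow_of_nonpos (by linarith) (by linarith) (neg_nonpos.2 hb)

lemma lintegral_ofReal_lt_top_of_le_norm_rpow {E : Type*} [NormedAddCommGroup E]
    [NormedSpace ℝ E] [FiniteDimensional ℝ E] [MeasurableSpace E] [BorelSpace E]
    (μ : Measure E) [μ.IsAddHaarMeasure] (hE : 1 ≤ finrank ℝ E) {f : E → ℝ} {C C' t b : ℝ}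
    (hC' : 0 ≤ C') (ht : t < finrank ℝ E) (hb : finrank ℝ E < b)
    (hnear : ∀ x, x ≠ 0 → ‖x‖ < 1 → f x ≤ C * ‖x‖ ^ (-t))
    (hfar : ∀ x, 1 ≤ ‖x‖ → f x ≤ C' * ‖x‖ ^ (-b)) :
    ∫⁻ x, ENNReal.ofReal (f x) ∂μ < ⊤ := by
  have : Nontrivial E := Module.nontrivial_of_finrank_pos (R := ℝ) hE
  rw [← lintegral_add_compl _ (measurableSet_ball (x := 0) (ε := 1))]
  refine ENNReal.add_lt_top.2 ⟨?_, ?_⟩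
  · have h_int : IntegrableOn (fun x : E ↦ C * ‖x‖ ^ (-t)) (ball 0 1) μ :=
      (integrableOn_ball_of_norm_le_rpow (f := fun x : E ↦ ‖x‖ ^ (-t)) (C := 1) hE ht
        (.of_forall fun x ↦ by rw [one_mul, Real.norm_of_nonneg (by positivity)])
        (by fun_prop : Measurable _).aestronglyMeasurable).const_mul C
    refine lt_of_le_of_lt (setLIntegral_mono_ae (by fun_prop) ?_) h_int.setLIntegral_lt_top
    filter_upwards [μ.ae_ne 0] with x hx0 hx
    exact ENNReal.ofReal_le_ofReal (hnear x hx0 (mem_ball_zero_iff.1 hx))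
  · have h_int : Integrable (fun x : E ↦ C' * 2 ^ b * (1 + ‖x‖) ^ (-b)) μ :=
      (integrable_one_add_norm hb).const_mul _
    refine lt_of_le_of_lt (setLIntegral_mono_ae (by fun_prop) ?_)
      (h_int.integrableOn (s := (ball 0 1)ᶜ)).setLIntegral_lt_top
    refine .of_forall fun x hx ↦ ENNReal.ofReal_le_ofReal ?_
    have hx1 : 1 ≤ ‖x‖ := by simpa using hx
    calc f x ≤ C' * ‖x‖ ^ (-b) := hfar x hx1
      _ ≤ C' * (2 ^ b * (1 + ‖x‖) ^ (-b)) := by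
          gcongr
          exact rpow_neg_le_two_rpow_mul_one_add_rpow_neg hx1 (by linarith)
      _ = C' * 2 ^ b * (1 + ‖x‖) ^ (-b) := (mul_assoc _ _ _).symm

lemma intervalIntegral_mono_of_nonneg {f g : ℝ → ℝ} {a b : ℝ} (hab : a ≤ b)
    (hg : IntervalIntegrable g volume a b) (hf0 : ∀ s ∈ Ioc a b, 0 ≤ f s)
    (hfg : ∀ s ∈ Ioc a b, f s ≤ g s) : ∫ s in a..b, f s ≤ ∫ s in a..b, g s := by
  rw [intervalIntegral.integral_of_le hab, intervalIntegral.integral_of_le hab]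
  rw [intervalIntegrable_iff_integrableOn_Ioc_of_le hab] at hg
  exact integral_mono_of_nonneg ((ae_restrict_iff' measurableSet_Ioc).2 (.of_forall hf0)) hg
    ((ae_restrict_iff' measurableSet_Ioc).2 (.of_forall hfg))

lemma integral_zero_one_le_of_le_rpow {f : ℝ → ℝ} {a b u v s₀ : ℝ} (hu : -1 < u) (hv : v ≠ 1)
    (hs₀ : 0 < s₀) (hs₀1 : s₀ ≤ 1) (hf0 : ∀ s ∈ Ioc (0 : ℝ) 1, 0 ≤ f s)
    (hfa : ∀ s ∈ Ioc (0 : ℝ) 1, f s ≤ a * s ^ u) (hfb : ∀ s ∈ Ioc (0 : ℝ) 1, f s ≤ b * s ^ (-v)) :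
    ∫ s in (0 : ℝ)..1, f s ≤ a * (s₀ ^ (u + 1) / (u + 1)) + b * ((s₀ ^ (1 - v) - 1) / (v - 1)) := by
  set g : ℝ → ℝ := fun s ↦ if s ≤ s₀ then a * s ^ u else b * s ^ (-v)
  have hg_left : EqOn (fun s ↦ a * s ^ u) g (uIoo 0 s₀) := fun s hs ↦
    (if_pos (by rw [uIoo_of_le hs₀.le] at hs; exact hs.2.le)).symm
  have hg_right : EqOn (fun s ↦ b * s ^ (-v)) g (uIoo s₀ 1) := fun s hs ↦
    (if_neg (by rw [uIoo_of_le hs₀1] at hs; exact hs.1.not_ge)).symm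
  have h_zero : (0 : ℝ) ∉ uIcc s₀ 1 := by
    rw [uIcc_of_le hs₀1]; exact fun h0 ↦ hs₀.not_ge h0.1
  have hi_left : IntervalIntegrable g volume 0 s₀ :=
    ((intervalIntegral.intervalIntegrable_rpow' hu).const_mul a).congr_uIoo hg_left
  have hi_right : IntervalIntegrable g volume s₀ 1 :=
    ((intervalIntegral.intervalIntegrable_rpow (Or.inr h_zero)).const_mul b).congr_uIoo hg_right
  calc ∫ s in (0 : ℝ)..1, f s ≤ ∫ s in (0 : ℝ)..1, g s := by
        refine intervalIntegral_mono_of_nonneg zero_le_one (hi_left.trans hi_right) hf0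
          fun s hs ↦ ?_
        by_cases hss : s ≤ s₀
        · simpa only [g, if_pos hss] using hfa s hs
        · simpa only [g, if_neg hss] using hfb s hs
    _ = (∫ s in (0 : ℝ)..s₀, a * s ^ u) + ∫ s in s₀..1, b * s ^ (-v) := by
        rw [← intervalIntegral.integral_add_adjacent_intervals hi_left hi_right,
          intervalIntegral.integral_congr_uIoo hg_left,
          intervalIntegral.integral_congr_uIoo hg_right]
    _ = a * (s₀ ^ (u + 1) / (u + 1)) + b * ((s₀ ^ (1 - v) - 1) / (v - 1)) := by
        have hv' : -v ≠ -1 := by rwa [ne_eq, neg_inj]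
        rw [intervalIntegral.integral_const_mul, intervalIntegral.integral_const_mul,
          integral_rpow (Or.inl hu), integral_rpow (Or.inr ⟨hv', h_zero⟩),
          Real.zero_rpow (by linarith), Real.one_rpow, sub_zero, neg_add_eq_sub,
          ← neg_div_neg_eq (1 - _), neg_sub, neg_sub]

section pker

variable {d : ℕ} {α c₂ p : ℝ} {q : EuclideanSpace ℝ (Fin d) → ℝ}

lemma pker_nonneg (hq0 : ∀ x, 0 ≤ q x) {s : ℝ} (hs : 0 ≤ s) (x : EuclideanSpace ℝ (Fin d)) :
    0 ≤ pker d α q s x :=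
  mul_nonneg (Real.rpow_nonneg hs _) (hq0 _)

lemma pker_le_mul_rpow (hc₂ : 0 ≤ c₂) (hq : ∀ x, q x ≤ c₂ / (1 + ‖x‖ ^ ((d : ℝ) + α)))
    {s : ℝ} (hs : 0 ≤ s) (x : EuclideanSpace ℝ (Fin d)) :
    pker d α q s x ≤ c₂ * s ^ (-(d : ℝ) / α) := by
  have hq_le : q ((s ^ (-(1 : ℝ) / α)) • x) ≤ c₂ :=
    (hq _).trans (div_le_self hc₂ (le_add_of_nonneg_right (by positivity)))
  calc pker d α q s x ≤ s ^ (-(d : ℝ) / α) * c₂ :=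
        mul_le_mul_of_nonneg_left hq_le (Real.rpow_nonneg hs _)
    _ = c₂ * s ^ (-(d : ℝ) / α) := mul_comm _ _

lemma pker_le_mul_norm_rpow (hα : α ≠ 0) (hc₂ : 0 ≤ c₂)
    (hq : ∀ x, q x ≤ c₂ / (1 + ‖x‖ ^ ((d : ℝ) + α))) {x : EuclideanSpace ℝ (Fin d)} (hx : x ≠ 0)
    {s : ℝ} (hs : 0 < s) : pker d α q s x ≤ c₂ * ‖x‖ ^ (-((d : ℝ) + α)) * s := by
  set c := s ^ (-(1 : ℝ) / α)
  have hc : 0 < c := Real.rpow_pos_of_pos hs _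
  have hx' : 0 < ‖x‖ := norm_pos_iff.2 hx
  have hq_le : q (c • x) ≤ c₂ * (c * ‖x‖) ^ (-((d : ℝ) + α)) := by
    refine (hq _).trans ?_
    rw [norm_smul, Real.norm_of_nonneg hc.le, Real.rpow_neg (by positivity), ← div_eq_mul_inv]
    exact div_le_div_of_nonneg_left hc₂ (by positivity) (le_add_of_nonneg_left zero_le_one)
  have hs_pow : s ^ (-(d : ℝ) / α) * c ^ (-((d : ℝ) + α)) = s := by
    rw [← Real.rpow_mul hs.le, ← Real.rpow_add hs]
    convert Real.rpow_one s using 2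
    field_simp
    ring
  calc pker d α q s x ≤ s ^ (-(d : ℝ) / α) * (c₂ * (c * ‖x‖) ^ (-((d : ℝ) + α))) :=
        mul_le_mul_of_nonneg_left hq_le (Real.rpow_nonneg hs.le _)
    _ = c₂ * ‖x‖ ^ (-((d : ℝ) + α)) * (s ^ (-(d : ℝ) / α) * c ^ (-((d : ℝ) + α))) := by
        rw [Real.mul_rpow hc.le hx'.le]; ring
    _ = c₂ * ‖x‖ ^ (-((d : ℝ) + α)) * s := by rw [hs_pow]

lemma pker_rpow_le_mul_rpow (hc₂ : 0 ≤ c₂) (hq0 : ∀ x, 0 ≤ q x)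
    (hq : ∀ x, q x ≤ c₂ / (1 + ‖x‖ ^ ((d : ℝ) + α))) (hp : 0 ≤ p) {s : ℝ} (hs : 0 ≤ s)
    (x : EuclideanSpace ℝ (Fin d)) :
    pker d α q s x ^ p ≤ c₂ ^ p * s ^ (-((d : ℝ) * p / α)) := by
  convert rpow_le_of_le_mul_rpow (pker_nonneg hq0 hs x) (pker_le_mul_rpow hc₂ hq hs x) hc₂ hs hp
    using 3
  ring

lemma pker_rpow_le_mul_norm_rpow (hα : α ≠ 0) (hc₂ : 0 ≤ c₂) (hq0 : ∀ x, 0 ≤ q x)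
    (hq : ∀ x, q x ≤ c₂ / (1 + ‖x‖ ^ ((d : ℝ) + α))) (hp : 0 ≤ p)
    {x : EuclideanSpace ℝ (Fin d)} (hx : x ≠ 0) {s : ℝ} (hs : 0 < s) :
    pker d α q s x ^ p ≤ c₂ ^ p * ‖x‖ ^ (-((d : ℝ) + α) * p) * s ^ p := by
  calc pker d α q s x ^ p ≤ (c₂ * ‖x‖ ^ (-((d : ℝ) + α)) * s) ^ p :=
        Real.rpow_le_rpow (pker_nonneg hq0 hs.le x) (pker_le_mul_norm_rpow hα hc₂ hq hx hs) hp
    _ = c₂ ^ p * ‖x‖ ^ (-((d : ℝ) + α) * p) * s ^ p := by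
        rw [Real.mul_rpow (by positivity) hs.le, Real.mul_rpow hc₂ (by positivity),
          ← Real.rpow_mul (norm_nonneg x)]

lemma integral_pker_rpow_le_norm_rpow (hα : α ≠ 0) (hc₂ : 0 ≤ c₂) (hq0 : ∀ x, 0 ≤ q x)
    (hq : ∀ x, q x ≤ c₂ / (1 + ‖x‖ ^ ((d : ℝ) + α))) (hp : 0 ≤ p)
    {x : EuclideanSpace ℝ (Fin d)} (hx : x ≠ 0) :
    ∫ s in (0 : ℝ)..1, pker d α q s x ^ p ≤ c₂ ^ p / (p + 1) * ‖x‖ ^ (-((d : ℝ) + α) * p) := by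
  calc ∫ s in (0 : ℝ)..1, pker d α q s x ^ p
      ≤ ∫ s in (0 : ℝ)..1, c₂ ^ p * ‖x‖ ^ (-((d : ℝ) + α) * p) * s ^ p :=
        intervalIntegral_mono_of_nonneg zero_le_one
          ((intervalIntegral.intervalIntegrable_rpow' (by linarith)).const_mul _)
          (fun s hs ↦ Real.rpow_nonneg (pker_nonneg hq0 hs.1.le x) p)
          (fun s hs ↦ pker_rpow_le_mul_norm_rpow hα hc₂ hq0 hq hp hx hs.1)
    _ = c₂ ^ p / (p + 1) * ‖x‖ ^ (-((d : ℝ) + α) * p) := by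
        rw [intervalIntegral.integral_const_mul, integral_rpow (Or.inl (by linarith)),
          Real.one_rpow, Real.zero_rpow (by linarith)]
        ring

lemma integral_pker_rpow_le_norm_rpow_of_norm_le_one (hα : 0 < α) (hc₂ : 0 ≤ c₂)
    (hq0 : ∀ x, 0 ≤ q x) (hq : ∀ x, q x ≤ c₂ / (1 + ‖x‖ ^ ((d : ℝ) + α))) (hp : 0 ≤ p)
    (hdp : α < d * p) {x : EuclideanSpace ℝ (Fin d)} (hx : x ≠ 0) (hx1 : ‖x‖ ≤ 1) :
    ∫ s in (0 : ℝ)..1, pker d α q s x ^ p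
      ≤ c₂ ^ p * (1 / (p + 1) + 1 / (d * p / α - 1)) * ‖x‖ ^ (α - d * p) := by
  have hx0 : 0 < ‖x‖ := norm_pos_iff.2 hx
  have hk : 1 < d * p / α := (one_lt_div hα).2 hdp
  have hpow_left : ‖x‖ ^ (-((d : ℝ) + α) * p) * (‖x‖ ^ α) ^ (p + 1) = ‖x‖ ^ (α - d * p) := by
    rw [← Real.rpow_mul hx0.le, ← Real.rpow_add hx0]; ring_nf
  have hpow_right : (‖x‖ ^ α) ^ (1 - d * p / α) = ‖x‖ ^ (α - d * p) := by
    rw [← Real.rpow_mul hx0.le]; congr 1; field_simp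
  calc ∫ s in (0 : ℝ)..1, pker d α q s x ^ p
      ≤ c₂ ^ p * ‖x‖ ^ (-((d : ℝ) + α) * p) * ((‖x‖ ^ α) ^ (p + 1) / (p + 1))
        + c₂ ^ p * (((‖x‖ ^ α) ^ (1 - d * p / α) - 1) / (d * p / α - 1)) :=
        integral_zero_one_le_of_le_rpow (by linarith) hk.ne' (by positivity)
          (Real.rpow_le_one hx0.le hx1 hα.le)
          (fun s hs ↦ Real.rpow_nonneg (pker_nonneg hq0 hs.1.le x) p)
          (fun s hs ↦ pker_rpow_le_mul_norm_rpow hα.ne' hc₂ hq0 hq hp hx hs.1)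
          (fun s hs ↦ pker_rpow_le_mul_rpow hc₂ hq0 hq hp hs.1.le x)
    _ ≤ c₂ ^ p * ‖x‖ ^ (-((d : ℝ) + α) * p) * ((‖x‖ ^ α) ^ (p + 1) / (p + 1))
        + c₂ ^ p * ((‖x‖ ^ α) ^ (1 - d * p / α) / (d * p / α - 1)) := by
        gcongr
        linarith
    _ = c₂ ^ p * (1 / (p + 1) + 1 / (d * p / α - 1)) * ‖x‖ ^ (α - d * p) := by
        linear_combination c₂ ^ p / (p + 1) * hpow_left + c₂ ^ p / (d * p / α - 1) * hpow_right

end pker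

lemma lintegral_integral_pker_rpow_lt_top {d : ℕ} {α c₂ p r : ℝ}
    {q : EuclideanSpace ℝ (Fin d) → ℝ} (hd : 1 ≤ d) (hα : 0 < α) (hc₂ : 0 ≤ c₂)
    (hq0 : ∀ x, 0 ≤ q x) (hq : ∀ x, q x ≤ c₂ / (1 + ‖x‖ ^ ((d : ℝ) + α))) (hp : 0 ≤ p)
    (hr : 0 ≤ r) (hdp : α < d * p) (hnear : (d * p - α) * r < d)
    (hfar : (d : ℝ) < (d + α) * p * r) :
    ∫⁻ x : EuclideanSpace ℝ (Fin d),
      ENNReal.ofReal ((∫ s in (0 : ℝ)..1, pker d α q s x ^ p) ^ r) < ⊤ := by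
  have hG : ∀ x, 0 ≤ ∫ s in (0 : ℝ)..1, pker d α q s x ^ p := fun x ↦
    intervalIntegral.integral_nonneg zero_le_one fun s hs ↦
      Real.rpow_nonneg (pker_nonneg hq0 hs.1 x) p
  have hdim : (finrank ℝ (EuclideanSpace ℝ (Fin d)) : ℝ) = d := by simp
  refine lintegral_ofReal_lt_top_of_le_norm_rpow volume (by simpa using hd)
    (C := (c₂ ^ p * (1 / (p + 1) + 1 / (d * p / α - 1))) ^ r) (C' := (c₂ ^ p / (p + 1)) ^ r)
    (Real.rpow_nonneg (div_nonneg (Real.rpow_nonneg hc₂ p) (by linarith)) r)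
    (by rwa [hdim]) (by rwa [hdim]) (fun x hx hx1 ↦ ?_) (fun x hx1 ↦ ?_)
  · have hk : 0 ≤ 1 / (d * p / α - 1) := by
      rw [one_div_nonneg, sub_nonneg, le_div_iff₀ hα, one_mul]; exact hdp.le
    convert rpow_le_of_le_mul_rpow (hG x) (integral_pker_rpow_le_norm_rpow_of_norm_le_one hα hc₂
      hq0 hq hp hdp hx hx1.le) (by positivity) (norm_nonneg x) hr using 3
    ring
  · convert rpow_le_of_le_mul_rpow (hG x) (integral_pker_rpow_le_norm_rpow hα.ne' hc₂ hq0 hq hp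
      (norm_pos_iff.1 (zero_lt_one.trans_le hx1))) (div_nonneg (Real.rpow_nonneg hc₂ p)
      (by linarith)) (norm_nonneg x) hr using 3
    ring

theorem stmt17_general (d : ℕ) (hd : 1 ≤ d) (α β γ : ℝ) (hα0 : 0 < α)
    (hβ0 : 0 < β) (hβ1 : β ≤ 1)
    (hdim1 : α / β ≤ d)
    (q : EuclideanSpace ℝ (Fin d) → ℝ) (hq0 : ∀ x, 0 ≤ q x)
    (c₂ : ℝ) (hc₂ : 0 < c₂) (hq : ∀ x, q x ≤ c₂ / (1 + ‖x‖ ^ ((d : ℝ) + α)))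
    (hγ0 : 0 < γ) (hγ1 : γ < 1 + β - ((d : ℝ) / α) * β)
    (p : ℝ) (hp : p = (1 + β) / (1 + β - γ)) :
    ∫⁻ x : EuclideanSpace ℝ (Fin d),
      ENNReal.ofReal ((∫ s in (0:ℝ)..1, (pker d α q s x) ^ p) ^ ((1 + β) / p)) < ⊤ := by
  have hdβ : (d : ℝ) * β < α * (1 + β - γ) := by
    rw [div_mul_eq_mul_div] at hγ1
    linarith [(div_lt_iff₀' hα0).1 (show d * β / α < 1 + β - γ by linarith)]
  have hβγ : 0 < 1 + β - γ := by nlinarith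
  have hp0 : 0 < p := hp ▸ div_pos (by linarith) hβγ
  have hr : (1 + β) / p = 1 + β - γ := by rw [hp]; field_simp
  have hpr : p * ((1 + β) / p) = 1 + β := mul_div_cancel₀ _ hp0.ne'
  refine lintegral_integral_pker_rpow_lt_top hd hα0 hc₂.le hq0 hq hp0.le (hr ▸ hβγ.le) ?_ ?_ ?_
  · rw [hp, mul_div_assoc', lt_div_iff₀ hβγ]
    nlinarith [(div_le_iff₀ hβ0).1 hdim1]
  · rw [sub_mul, mul_assoc, hpr, hr]; linarith
  · rw [mul_assoc, hpr]; nlinarith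

/-- Key finiteness in the tightness proof (Proposition 3.3): for
`α/β ≤ d < α(1+β)/β`, `0 < γ < 1+β−(d/α)β` and `p = (1+β)/(1+β−γ)`,
`∫_{ℝ^d} (∫_0^1 p_s(x)^p ds)^{(1+β)/p} dx < ∞`. -/
theorem stmt17 (d : ℕ) (hd : 1 ≤ d) (α β γ : ℝ) (hα0 : 0 < α) (hα2 : α ≤ 2)
    (hβ0 : 0 < β) (hβ1 : β ≤ 1)
    (hdim1 : α / β ≤ d) (hdim2 : (d : ℝ) < α * (1 + β) / β)
    (q : EuclideanSpace ℝ (Fin d) → ℝ) (hqm : Measurable q) (hq0 : ∀ x, 0 ≤ q x)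
    (c₂ : ℝ) (hc₂ : 0 < c₂) (hq : ∀ x, q x ≤ c₂ / (1 + ‖x‖ ^ ((d : ℝ) + α)))
    (hγ0 : 0 < γ) (hγ1 : γ < 1 + β - ((d : ℝ) / α) * β)
    (p : ℝ) (hp : p = (1 + β) / (1 + β - γ)) :
    ∫⁻ x : EuclideanSpace ℝ (Fin d),
      ENNReal.ofReal ((∫ s in (0:ℝ)..1, (pker d α q s x) ^ p) ^ ((1 + β) / p)) < ⊤ :=
  stmt17_general d hd α β γ hα0 hβ0 hβ1 hdim1 q hq0 c₂ hc₂ hq hγ0 hγ1 p hp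
end

section
/- Let d ≥ 1 be an integer and 0 < β < 1 with 2/β < d < 2(1+β)/β, let p_t(x) = (4πt)^{−d/2} exp(−‖x‖²/(4t)) be the Gaussian heat kernel on ℝ^d, set F_T = T^{(2+β−(d/2)β)/(1+β)} for T > 0, and let φ : ℝ^d → [0,∞) be a Schwartz function. Then lim_{T→∞} (T²/F_T²) ∫_{ℝ^d} ∫_0^1 ∫_0^r φ(x) · (p_{T(r−u)} * φ)(x) du dr dx = 0. -/
/-! For `d > 2` the semigroup `(p_s * φ)(x)` is bounded by `min (sup φ) (c s^{-d/2})`, which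
is integrable over `s ∈ (0, ∞)`. The substitution `s = T (r - u)` therefore makes the triple
integral `O(1/T)`, and `T² / F_T² · T⁻¹ = T^{1 - 2κ} → 0` since `κ = (2 + β - dβ/2)/(1 + β)`
exceeds `1/2` exactly when `d < (3 + β)/β`, which follows from `d < 2(1 + β)/β` and `β < 1`. -/

open MeasureTheory Filter
open scoped Topology

noncomputable def heatKer (d : ℕ) (t : ℝ) (x : EuclideanSpace ℝ (Fin d)) : ℝ :=
  (4 * Real.pi * t) ^ (-(d : ℝ) / 2) * Real.exp (-‖x‖ ^ 2 / (4 * t))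

open Set

lemma integrableOn_Ioi_min_rpow {M c a : ℝ} (hM : 0 ≤ M) (hc : 0 ≤ c) (ha : a < -1) :
    IntegrableOn (fun s => min M (c * s ^ a)) (Ioi 0) := by
  have hmeas : AEStronglyMeasurable (fun s : ℝ => min M (c * s ^ a)) := by fun_prop
  have hnonneg : ∀ s : ℝ, 0 ≤ s → 0 ≤ min M (c * s ^ a) :=
    fun s hs => le_min hM (mul_nonneg hc (Real.rpow_nonneg hs a))
  rw [← Ioc_union_Ioi_eq_Ioi zero_le_one]
  refine IntegrableOn.union ?_ ?_
  · refine (integrableOn_const (C := M) measure_Ioc_lt_top.ne).mono' hmeas.restrict ?_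
    filter_upwards [ae_restrict_mem measurableSet_Ioc] with s hs
    rw [Real.norm_of_nonneg (hnonneg s hs.1.le)]
    exact min_le_left _ _
  · refine ((integrableOn_Ioi_rpow_of_lt ha one_pos).const_mul c).mono' hmeas.restrict ?_
    filter_upwards [ae_restrict_mem measurableSet_Ioi] with s hs
    rw [Real.norm_of_nonneg (hnonneg s (zero_le_one.trans hs.le))]
    exact min_le_right _ _

lemma intervalIntegral_le_setIntegral_Ioi {f g : ℝ → ℝ} (hf : ∀ s > 0, 0 ≤ f s)
    (hg : IntegrableOn g (Ioi 0)) (hfg : ∀ s > 0, f s ≤ g s) {S : ℝ} (hS : 0 ≤ S) :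
    ∫ s in 0..S, f s ≤ ∫ s in Ioi 0, g s := by
  rw [intervalIntegral.integral_of_le hS]
  calc ∫ s in Ioc 0 S, f s ≤ ∫ s in Ioc 0 S, g s :=
        integral_mono_of_nonneg
          (ae_restrict_of_forall_mem measurableSet_Ioc fun s hs => hf s hs.1)
          (hg.mono_set Ioc_subset_Ioi_self)
          (ae_restrict_of_forall_mem measurableSet_Ioc fun s hs => hfg s hs.1)
    _ ≤ ∫ s in Ioi 0, g s :=
        setIntegral_mono_set hg
          (ae_restrict_of_forall_mem measurableSet_Ioi fun s hs => (hf s hs).trans (hfg s hs))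
          Ioc_subset_Ioi_self.eventuallyLE

lemma intervalIntegral_mem_Icc_of_mem_Icc {h : ℝ → ℝ} {a B : ℝ} (ha : 0 ≤ a)
    (hh : ∀ r ∈ Ioc 0 a, h r ∈ Icc 0 B) : ∫ r in 0..a, h r ∈ Icc 0 (a * B) := by
  rw [intervalIntegral.integral_of_le ha]
  refine ⟨setIntegral_nonneg measurableSet_Ioc fun r hr => (hh r hr).1, ?_⟩
  calc ∫ r in Ioc 0 a, h r ≤ ∫ _ in Ioc 0 a, B :=
        integral_mono_of_nonneg
          (ae_restrict_of_forall_mem measurableSet_Ioc fun r hr => (hh r hr).1)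
          (integrableOn_const measure_Ioc_lt_top.ne)
          (ae_restrict_of_forall_mem measurableSet_Ioc fun r hr => (hh r hr).2)
    _ = a * B := by simp [ha]

lemma intervalIntegral_comp_mul_sub {f : ℝ → ℝ} {T : ℝ} (hT : T ≠ 0) (r : ℝ) :
    ∫ u in 0..r, f (T * (r - u)) = T⁻¹ * ∫ s in 0..T * r, f s := by
  simp_rw [mul_sub]
  rw [intervalIntegral.integral_comp_sub_mul f hT, sub_self, mul_zero, sub_zero, smul_eq_mul]

lemma intervalIntegral_comp_mul_sub_mem_Icc {f g : ℝ → ℝ} (hf : ∀ s > 0, 0 ≤ f s)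
    (hg : IntegrableOn g (Ioi 0)) (hfg : ∀ s > 0, f s ≤ g s) {T r : ℝ} (hT : 0 < T)
    (hr : 0 ≤ r) :
    ∫ u in 0..r, f (T * (r - u)) ∈ Icc 0 (T⁻¹ * ∫ s in Ioi 0, g s) := by
  have hTr : 0 ≤ T * r := by positivity
  rw [intervalIntegral_comp_mul_sub hT.ne']
  refine ⟨mul_nonneg (inv_nonneg.mpr hT.le) ?_, mul_le_mul_of_nonneg_left
    (intervalIntegral_le_setIntegral_Ioi hf hg hfg hTr) (inv_nonneg.mpr hT.le)⟩
  rw [intervalIntegral.integral_of_le hTr]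
  exact setIntegral_nonneg measurableSet_Ioc fun s hs => hf s hs.1

lemma tendsto_sq_div_rpow_sq_mul {κ A : ℝ} {I : ℝ → ℝ} (hκ : 1 / 2 < κ)
    (hI : ∀ᶠ T in atTop, I T ∈ Icc 0 (T⁻¹ * A)) :
    Tendsto (fun T => T ^ 2 / (T ^ κ) ^ 2 * I T) atTop (𝓝 0) := by
  have hdecay : Tendsto (fun T : ℝ => A * T ^ (1 - 2 * κ)) atTop (𝓝 0) := by
    simpa using (tendsto_rpow_neg_atTop (y := 2 * κ - 1) (by linarith)).const_mul A
  refine squeeze_zero' ?_ ?_ hdecay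
  · filter_upwards [hI, eventually_ge_atTop 0] with T hIT hT
    exact mul_nonneg (by positivity) hIT.1
  · filter_upwards [hI, eventually_gt_atTop 0] with T hIT hT
    calc T ^ 2 / (T ^ κ) ^ 2 * I T ≤ T ^ 2 / (T ^ κ) ^ 2 * (T⁻¹ * A) :=
          mul_le_mul_of_nonneg_left hIT.2 (by positivity)
      _ = A * T ^ (1 - 2 * κ) := by
          have hsq : (T ^ κ) ^ 2 = T ^ (2 * κ) := by
            rw [← Real.rpow_natCast, ← Real.rpow_mul hT.le, Nat.cast_ofNat, mul_comm]
          rw [hsq, Real.rpow_sub hT, Real.rpow_one]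
          field_simp

section HeatKernel

variable {d : ℕ} {t : ℝ}

lemma heatKer_nonneg (ht : 0 ≤ t) (x : EuclideanSpace ℝ (Fin d)) : 0 ≤ heatKer d t x :=
  mul_nonneg (Real.rpow_nonneg (by positivity) _) (Real.exp_nonneg _)

lemma heatKer_le (ht : 0 < t) (x : EuclideanSpace ℝ (Fin d)) :
    heatKer d t x ≤ (4 * Real.pi * t) ^ (-(d : ℝ) / 2) := by
  refine mul_le_of_le_one_right (Real.rpow_nonneg (by positivity) _) ?_
  exact Real.exp_le_one_iff.mpr (div_nonpos_of_nonpos_of_nonneg (by simp) (by positivity))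

lemma heatKer_eq_mul_exp (x : EuclideanSpace ℝ (Fin d)) :
    heatKer d t x = (4 * Real.pi * t) ^ (-(d : ℝ) / 2) * Real.exp (-(4 * t)⁻¹ * ‖x‖ ^ 2) := by
  rw [heatKer, neg_mul, inv_mul_eq_div, ← neg_div]

lemma integrable_heatKer (ht : 0 < t) : Integrable (heatKer d t) := by
  have h := (GaussianFourier.integrable_cexp_neg_mul_sq_norm_add
      (V := EuclideanSpace ℝ (Fin d)) (b := ((4 * t)⁻¹ : ℝ))
      (by simpa using ht) 0 0).norm.const_mul ((4 * Real.pi * t) ^ (-(d : ℝ) / 2))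
  convert h using 2 with y
  simp [heatKer_eq_mul_exp, Complex.norm_exp, ← Complex.ofReal_pow]

lemma integral_heatKer (ht : 0 < t) : ∫ x, heatKer d t x = 1 := by
  simp_rw [heatKer_eq_mul_exp]
  rw [integral_const_mul, GaussianFourier.integral_rexp_neg_mul_sq_norm (by positivity),
    finrank_euclideanSpace_fin, div_inv_eq_mul, mul_comm Real.pi (4 * t), mul_right_comm,
    ← Real.rpow_add (by positivity), neg_div, neg_add_cancel, Real.rpow_zero]

end HeatKernel

noncomputable def heatSemigroup (d : ℕ) (t : ℝ) (φ : EuclideanSpace ℝ (Fin d) → ℝ)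
    (x : EuclideanSpace ℝ (Fin d)) : ℝ :=
  ∫ y, heatKer d t (x - y) * φ y

section HeatSemigroup

variable {d : ℕ} {t : ℝ} {φ : EuclideanSpace ℝ (Fin d) → ℝ}

lemma heatSemigroup_nonneg (ht : 0 ≤ t) (hφ : 0 ≤ φ) (x : EuclideanSpace ℝ (Fin d)) :
    0 ≤ heatSemigroup d t φ x :=
  integral_nonneg fun y => mul_nonneg (heatKer_nonneg ht _) (hφ y)

lemma heatSemigroup_le_of_le {M : ℝ} (ht : 0 < t) (hφ : 0 ≤ φ) (hφM : ∀ y, φ y ≤ M)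
    (x : EuclideanSpace ℝ (Fin d)) : heatSemigroup d t φ x ≤ M := by
  calc heatSemigroup d t φ x ≤ ∫ y, heatKer d t (x - y) * M :=
        integral_mono_of_nonneg (.of_forall fun y => mul_nonneg (heatKer_nonneg ht.le _) (hφ y))
          (((integrable_heatKer ht).comp_sub_left x).mul_const M)
          (.of_forall fun y => mul_le_mul_of_nonneg_left (hφM y) (heatKer_nonneg ht.le _))
    _ = M := by
        rw [integral_mul_const, integral_sub_left_eq_self (heatKer d t) volume x,
          integral_heatKer ht, one_mul]

lemma heatSemigroup_le_rpow (ht : 0 < t) (hφ : 0 ≤ φ) (hφi : Integrable φ)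
    (x : EuclideanSpace ℝ (Fin d)) :
    heatSemigroup d t φ x ≤ (4 * Real.pi) ^ (-(d : ℝ) / 2) * (∫ y, φ y) * t ^ (-(d : ℝ) / 2) := by
  calc heatSemigroup d t φ x ≤ ∫ y, (4 * Real.pi * t) ^ (-(d : ℝ) / 2) * φ y :=
        integral_mono_of_nonneg (.of_forall fun y => mul_nonneg (heatKer_nonneg ht.le _) (hφ y))
          (hφi.const_mul _)
          (.of_forall fun y => mul_le_mul_of_nonneg_right (heatKer_le ht _) (hφ y))
    _ = _ := by rw [integral_const_mul, Real.mul_rpow (by positivity) ht.le]; ring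

lemma heatSemigroup_le_min {M t : ℝ} (ht : 0 < t) (hφ : 0 ≤ φ) (hφi : Integrable φ)
    (hφM : ∀ y, φ y ≤ M) (x : EuclideanSpace ℝ (Fin d)) :
    heatSemigroup d t φ x ≤
      min M ((4 * Real.pi) ^ (-(d : ℝ) / 2) * (∫ y, φ y) * t ^ (-(d : ℝ) / 2)) :=
  le_min (heatSemigroup_le_of_le ht hφ hφM x) (heatSemigroup_le_rpow ht hφ hφi x)

lemma exists_integral_heatSemigroup_mem_Icc_inv_mul (hd : 2 < (d : ℝ)) (hφ : 0 ≤ φ)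
    (hφi : Integrable φ) {M : ℝ} (hφM : ∀ y, φ y ≤ M) :
    ∃ A, ∀ T > 0, ∫ x, ∫ r in 0..1, ∫ u in 0..r, φ x * heatSemigroup d (T * (r - u)) φ x
      ∈ Icc 0 (T⁻¹ * A) := by
  set c := (4 * Real.pi) ^ (-(d : ℝ) / 2) * ∫ y, φ y
  have hg : IntegrableOn (fun s => min M (c * s ^ (-(d : ℝ) / 2))) (Ioi 0) :=
    integrableOn_Ioi_min_rpow ((hφ 0).trans (hφM 0))
      (mul_nonneg (by positivity) (integral_nonneg hφ)) (by linarith)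
  refine ⟨(∫ y, φ y) * ∫ s in Ioi 0, min M (c * s ^ (-(d : ℝ) / 2)), fun T hT => ?_⟩
  have htime : ∀ x, ∫ r in 0..1, ∫ u in 0..r, heatSemigroup d (T * (r - u)) φ x
      ∈ Icc 0 (T⁻¹ * ∫ s in Ioi 0, min M (c * s ^ (-(d : ℝ) / 2))) := fun x => by
    simpa using intervalIntegral_mem_Icc_of_mem_Icc zero_le_one fun r hr =>
      intervalIntegral_comp_mul_sub_mem_Icc (f := fun s => heatSemigroup d s φ x)
        (fun s hs => heatSemigroup_nonneg hs.le hφ x) hg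
        (fun s hs => heatSemigroup_le_min hs hφ hφi hφM x) hT hr.1.le
  simp_rw [intervalIntegral.integral_const_mul]
  refine ⟨integral_nonneg fun x => mul_nonneg (hφ x) (htime x).1, ?_⟩
  calc _ ≤ ∫ x, φ x * (T⁻¹ * ∫ s in Ioi 0, min M (c * s ^ (-(d : ℝ) / 2))) :=
        integral_mono_of_nonneg (.of_forall fun x => mul_nonneg (hφ x) (htime x).1)
          (hφi.mul_const _) (.of_forall fun x => mul_le_mul_of_nonneg_left (htime x).2 (hφ x))
    _ = _ := by rw [integral_mul_const]; ring

end HeatSemigroup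

lemma SchwartzMap.le_norm_toBoundedContinuousFunction {E : Type*} [NormedAddCommGroup E]
    [NormedSpace ℝ E] (φ : SchwartzMap E ℝ) (x : E) :
    φ x ≤ ‖φ.toBoundedContinuousFunction‖ :=
  (le_abs_self _).trans (φ.toBoundedContinuousFunction.norm_coe_le_norm x)

theorem stmt19_general (d : ℕ) (β : ℝ) (hβ0 : 0 < β) (hβ1 : β < 1)
    (hdim1 : 2 / β < d) (hdim2 : (d : ℝ) < 2 * (1 + β) / β)
    (φ : SchwartzMap (EuclideanSpace ℝ (Fin d)) ℝ) (hφ0 : ∀ x, 0 ≤ φ x) :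
    Filter.Tendsto (fun T : ℝ =>
        T ^ 2 / (T ^ ((2 + β - ((d : ℝ) / 2) * β) / (1 + β))) ^ 2 *
          ∫ x : EuclideanSpace ℝ (Fin d), ∫ r in (0:ℝ)..1, ∫ u in (0:ℝ)..r,
            φ x * ∫ y : EuclideanSpace ℝ (Fin d), heatKer d (T * (r - u)) (x - y) * φ y)
      atTop (𝓝 0) := by
  have hd : 2 < (d : ℝ) := lt_trans (by rw [lt_div_iff₀ hβ0]; linarith) hdim1
  have hκ : 1 / 2 < (2 + β - ((d : ℝ) / 2) * β) / (1 + β) := by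
    rw [lt_div_iff₀ (by linarith)]
    rw [lt_div_iff₀ hβ0] at hdim2
    linarith
  obtain ⟨A, hA⟩ := exists_integral_heatSemigroup_mem_Icc_inv_mul hd hφ0 φ.integrable
    φ.le_norm_toBoundedContinuousFunction
  exact tendsto_sq_div_rpow_sq_mul hκ ((eventually_gt_atTop 0).mono hA)

/-- Vanishing of the term `I₂(T)` (3.24) in the Brownian case: with the norming
`F_T = T^{(2+β−(d/2)β)/(1+β)}` and a nonnegative Schwartz function `φ`,
`(T²/F_T²) ∫_{ℝ^d} ∫_0^1 ∫_0^r φ(x) (p_{T(r−u)} * φ)(x) du dr dx → 0` as `T → ∞`. -/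
theorem stmt19 (d : ℕ) (hd : 1 ≤ d) (β : ℝ) (hβ0 : 0 < β) (hβ1 : β < 1)
    (hdim1 : 2 / β < d) (hdim2 : (d : ℝ) < 2 * (1 + β) / β)
    (φ : SchwartzMap (EuclideanSpace ℝ (Fin d)) ℝ) (hφ0 : ∀ x, 0 ≤ φ x) :
    Filter.Tendsto (fun T : ℝ =>
        T ^ 2 / (T ^ ((2 + β - ((d : ℝ) / 2) * β) / (1 + β))) ^ 2 *
          ∫ x : EuclideanSpace ℝ (Fin d), ∫ r in (0:ℝ)..1, ∫ u in (0:ℝ)..r,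
            φ x * ∫ y : EuclideanSpace ℝ (Fin d), heatKer d (T * (r - u)) (x - y) * φ y)
      atTop (𝓝 0) :=
  stmt19_general d β hβ0 hβ1 hdim1 hdim2 φ hφ0
end
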